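/- Fix R > 0 and an integer m. For (δ_R, δ_I) ∈ ℝ² define r(α) = R + δ_R cos(mα) − δ_I sin(mα) and the curve X(α) = r(α)(cos α, sin α). Then as (δ_R, δ_I) → (0,0) the radial projection of the Airy velocity satisfies, uniformly in α ∈ [0,2π]: W(α)·(cos α, sin α) = δ_I τ* cos(mα) + δ_R τ* sin(mα) + O(δ_R² + δ_I²), where τ* = (m³ − (3/2)m)/R³. Precisely, there exist C > 0 and ε > 0 such that whenever δ_R² + δ_I² < ε², for all α: |W(α)·(cos α, sin α) − τ*(δ_I cos(mα) + δ_R sin(mα))| ≤ C(δ_R² + δ_I²). -/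

import Mathlib

open scoped Real

noncomputable section

/-- The arclength element `s_α = √(r² + r_α²)` of the curve `X(α) = r(α)(cos α, sin α)`. -/
def polarSA (r : ℝ → ℝ) (α : ℝ) : ℝ := Real.sqrt (r α ^ 2 + (deriv r α) ^ 2)

/-- Curvature `k = (r² + 2r_α² − r r_αα)/(r² + r_α²)^{3/2}`. -/
def polarCurvature (r : ℝ → ℝ) (α : ℝ) : ℝ :=
  (r α ^ 2 + 2 * (deriv r α) ^ 2 - r α * deriv (deriv r) α) / polarSA r α ^ 3

/-- Arclength derivative of the curvature, `k_s = k_α / s_α`. -/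
def polarKs (r : ℝ → ℝ) (α : ℝ) : ℝ := deriv (polarCurvature r) α / polarSA r α

/-- The unit tangent `τ = X_α/s_α` of the curve `X(α) = r(α)(cos α, sin α)`. -/
def polarTangent (r : ℝ → ℝ) (α : ℝ) : ℝ × ℝ :=
  (deriv (fun a => r a * Real.cos a) α / polarSA r α,
   deriv (fun a => r a * Real.sin a) α / polarSA r α)

/-- The unit normal `n = (r_α sin α + r cos α, r sin α − r_α cos α)/s_α`. -/
def polarNormal (r : ℝ → ℝ) (α : ℝ) : ℝ × ℝ :=
  ((deriv r α * Real.sin α + r α * Real.cos α) / polarSA r α,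
   (r α * Real.sin α - deriv r α * Real.cos α) / polarSA r α)

/-- The Airy velocity `W = (−k_s) n + (k²/2) τ`. -/
def airyVelocity (r : ℝ → ℝ) (α : ℝ) : ℝ × ℝ :=
  (-(polarKs r α) * (polarNormal r α).1 + (polarCurvature r α ^ 2 / 2) * (polarTangent r α).1,
   -(polarKs r α) * (polarNormal r α).2 + (polarCurvature r α ^ 2 / 2) * (polarTangent r α).2)

/-- Radial projection `W · (cos α, sin α)` of the Airy velocity. -/
def airyRadialProj (r : ℝ → ℝ) (α : ℝ) : ℝ :=
  (airyVelocity r α).1 * Real.cos α + (airyVelocity r α).2 * Real.sin α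

end

/-!
The radial component of `W` is `N(r, r_α, r_αα, r_ααα) / s_α⁷` for an explicit polynomial `N`.
Write `p + i q = (δR + i δI) e^{i m α}`, so that `r = R + p` and `r_α = -m q`. Since
`r_ααα = -m² r_α`, the factor `r_α` divides `N`, and `W · (cos α, sin α) = m q F(p, q)` with `F`
differentiable at the origin and `τ* = m F(0)`. Hence the error is
`|m q| |F(p, q) - F(0)| = O(|q| ‖(p, q)‖) = O(δR² + δI²)`.
-/

open Real

section PolarCurve

variable {r r₁ r₂ : ℝ → ℝ} {r₃ α : ℝ}

theorem airyRadialProj_eq (hr : DifferentiableAt ℝ r α) :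
    airyRadialProj r α =
      (deriv r α * polarCurvature r α ^ 2 / 2 - r α * polarKs r α) / polarSA r α := by
  have hx : deriv (fun a => r a * cos a) α = deriv r α * cos α - r α * sin α :=
    (hr.hasDerivAt.mul (hasDerivAt_cos α)).deriv.trans (by ring)
  have hy : deriv (fun a => r a * sin a) α = deriv r α * sin α + r α * cos α :=
    (hr.hasDerivAt.mul (hasDerivAt_sin α)).deriv
  simp only [airyRadialProj, airyVelocity, polarNormal, polarTangent, hx, hy]
  linear_combination (r α * -polarKs r α + deriv r α * (polarCurvature r α ^ 2 / 2)) /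
    polarSA r α * sin_sq_add_cos_sq α

theorem polarCurvature_eq_of_hasDerivAt (h₁ : ∀ a, HasDerivAt r (r₁ a) a)
    (h₂ : ∀ a, HasDerivAt r₁ (r₂ a) a) :
    polarCurvature r =
      fun a => (r a ^ 2 + 2 * r₁ a ^ 2 - r a * r₂ a) / √(r a ^ 2 + r₁ a ^ 2) ^ 3 := by
  have hd : deriv r = r₁ := funext fun a => (h₁ a).deriv
  have hdd : deriv r₁ = r₂ := funext fun a => (h₂ a).deriv
  funext a
  simp only [polarCurvature, polarSA, hd, hdd]

/-- Numerator of `W · (cos α, sin α) = N / s_α⁷`, in terms of `r, r_α, r_αα, r_ααα`. -/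
noncomputable def airyRadialNumerator (x₀ x₁ x₂ x₃ : ℝ) : ℝ :=
  x₁ * (x₀ ^ 2 + 2 * x₁ ^ 2 - x₀ * x₂) ^ 2 / 2
    - x₀ * ((2 * x₀ * x₁ + 3 * x₁ * x₂ - x₀ * x₃) * (x₀ ^ 2 + x₁ ^ 2)
      - 3 * (x₀ ^ 2 + 2 * x₁ ^ 2 - x₀ * x₂) * x₁ * (x₀ + x₂))

theorem airyRadialProj_eq_of_hasDerivAt (h₁ : ∀ a, HasDerivAt r (r₁ a) a)
    (h₂ : ∀ a, HasDerivAt r₁ (r₂ a) a) (h₃ : HasDerivAt r₂ r₃ α)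
    (hQ : 0 < r α ^ 2 + r₁ α ^ 2) :
    airyRadialProj r α =
      airyRadialNumerator (r α) (r₁ α) (r₂ α) r₃ / √(r α ^ 2 + r₁ α ^ 2) ^ 7 := by
  have hQd : HasDerivAt (fun a => r a ^ 2 + r₁ a ^ 2) (2 * r α * r₁ α + 2 * r₁ α * r₂ α) α :=
    ((h₁ α).pow 2).add ((h₂ α).pow 2) |>.congr_deriv (by push_cast; ring)
  have hsq : HasDerivAt (fun a => √(r a ^ 2 + r₁ a ^ 2))
      ((2 * r α * r₁ α + 2 * r₁ α * r₂ α) / (2 * √(r α ^ 2 + r₁ α ^ 2))) α :=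
    hQd.sqrt hQ.ne'
  have hk : HasDerivAt (polarCurvature r) ((
      (2 * r α * r₁ α + 4 * r₁ α * r₂ α - (r₁ α * r₂ α + r α * r₃)) * √(r α ^ 2 + r₁ α ^ 2) ^ 3
        - (r α ^ 2 + 2 * r₁ α ^ 2 - r α * r₂ α) * (3 * √(r α ^ 2 + r₁ α ^ 2) ^ 2 *
          ((2 * r α * r₁ α + 2 * r₁ α * r₂ α) / (2 * √(r α ^ 2 + r₁ α ^ 2)))))
      / (√(r α ^ 2 + r₁ α ^ 2) ^ 3) ^ 2) α := by
    rw [polarCurvature_eq_of_hasDerivAt h₁ h₂]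
    refine HasDerivAt.div ?_ (hsq.pow 3 |>.congr_deriv (by push_cast; ring)) (by positivity)
    exact (((h₁ α).pow 2).add (((h₂ α).pow 2).const_mul 2) |>.sub ((h₁ α).mul h₃)).congr_deriv
      (by push_cast; ring)
  have hs0 : 0 < √(r α ^ 2 + r₁ α ^ 2) := sqrt_pos.mpr hQ
  have hs2 : √(r α ^ 2 + r₁ α ^ 2) ^ 2 = r α ^ 2 + r₁ α ^ 2 := sq_sqrt hQ.le
  rw [airyRadialProj_eq (h₁ α).differentiableAt, polarKs, hk.deriv, (h₁ α).deriv,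
    polarCurvature_eq_of_hasDerivAt h₁ h₂, polarSA, (h₁ α).deriv, airyRadialNumerator]
  set s := √(r α ^ 2 + r₁ α ^ 2)
  rw [← hs2]
  field_simp
  ring

end PolarCurve

section PerturbedCircle

variable (m δR δI : ℝ)

/-- Real and imaginary parts of `(δR + i δI) e^{i m a}`. -/
noncomputable def modeRe (a : ℝ) : ℝ := δR * cos (m * a) - δI * sin (m * a)

noncomputable def modeIm (a : ℝ) : ℝ := δR * sin (m * a) + δI * cos (m * a)

theorem hasDerivAt_modeRe (a : ℝ) : HasDerivAt (modeRe m δR δI) (-(m * modeIm m δR δI a)) a := by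
  have hm : HasDerivAt (fun a => m * a) m a := by simpa using (hasDerivAt_id a).const_mul m
  exact ((hm.cos.const_mul δR).sub (hm.sin.const_mul δI)).congr_deriv (by simp only [modeIm]; ring)

theorem hasDerivAt_modeIm (a : ℝ) : HasDerivAt (modeIm m δR δI) (m * modeRe m δR δI a) a := by
  have hm : HasDerivAt (fun a => m * a) m a := by simpa using (hasDerivAt_id a).const_mul m
  exact ((hm.sin.const_mul δR).add (hm.cos.const_mul δI)).congr_deriv (by simp only [modeRe]; ring)

theorem modeRe_sq_add_modeIm_sq (a : ℝ) :
    modeRe m δR δI a ^ 2 + modeIm m δR δI a ^ 2 = δR ^ 2 + δI ^ 2 := by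
  simp only [modeRe, modeIm]
  linear_combination (δR ^ 2 + δI ^ 2) * sin_sq_add_cos_sq (m * a)

variable (R : ℝ)

/-- `-airyRadialNumerator / (r_α s_α⁷)` for `r = R + v.1`, `r_α = -m v.2`, `r_αα = -m² v.1`. -/
noncomputable def circleAiryFactor (v : ℝ × ℝ) : ℝ :=
  ((R + v.1) * (((2 + m ^ 2) * (R + v.1) - 3 * m ^ 2 * v.1) * ((R + v.1) ^ 2 + m ^ 2 * v.2 ^ 2)
      - 3 * ((R + v.1) ^ 2 + 2 * m ^ 2 * v.2 ^ 2 + m ^ 2 * (R + v.1) * v.1) * (R + v.1 - m ^ 2 * v.1))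
    - ((R + v.1) ^ 2 + 2 * m ^ 2 * v.2 ^ 2 + m ^ 2 * (R + v.1) * v.1) ^ 2 / 2)
  / √((R + v.1) ^ 2 + m ^ 2 * v.2 ^ 2) ^ 7

theorem circleAiryFactor_zero {R : ℝ} (hR : 0 < R) :
    circleAiryFactor m R 0 = (m ^ 2 - 3 / 2) / R ^ 3 := by
  simp only [circleAiryFactor, Prod.fst_zero, Prod.snd_zero, add_zero]
  rw [show R ^ 2 + m ^ 2 * 0 ^ 2 = R ^ 2 by ring, sqrt_sq hR.le]
  field_simp
  ring

theorem differentiableAt_circleAiryFactor {R : ℝ} (hR : R ≠ 0) :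
    DifferentiableAt ℝ (circleAiryFactor m R) 0 := by
  unfold circleAiryFactor
  fun_prop (disch := simp only [Prod.fst_zero, Prod.snd_zero, add_zero]; positivity)

/-- `airyRadialNumerator` is divisible by `r_α = -m · modeIm` because `r_ααα = -m² r_α` on this
family. -/
theorem airyRadialProj_perturbedCircle (α : ℝ) (hα : R + modeRe m δR δI α ≠ 0) :
    airyRadialProj (fun a => R + modeRe m δR δI a) α =
      m * modeIm m δR δI α * circleAiryFactor m R (modeRe m δR δI α, modeIm m δR δI α) := by
  have h₁ (a : ℝ) : HasDerivAt (fun a => R + modeRe m δR δI a) (-(m * modeIm m δR δI a)) a :=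
    (hasDerivAt_modeRe m δR δI a).const_add R
  have h₂ (a : ℝ) : HasDerivAt (fun a => -(m * modeIm m δR δI a))
      (-(m ^ 2 * modeRe m δR δI a)) a :=
    ((hasDerivAt_modeIm m δR δI a).const_mul m).neg.congr_deriv (by ring)
  have h₃ : HasDerivAt (fun a => -(m ^ 2 * modeRe m δR δI a)) (m ^ 3 * modeIm m δR δI α) α :=
    ((hasDerivAt_modeRe m δR δI α).const_mul (m ^ 2)).neg.congr_deriv (by ring)
  rw [airyRadialProj_eq_of_hasDerivAt h₁ h₂ h₃ (by positivity), airyRadialNumerator,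
    circleAiryFactor, neg_sq, mul_pow]
  ring

end PerturbedCircle

theorem sq_norm_le_fst_sq_add_snd_sq (v : ℝ × ℝ) : ‖v‖ ^ 2 ≤ v.1 ^ 2 + v.2 ^ 2 := by
  rcases max_choice ‖v.1‖ ‖v.2‖ with h | h <;>
    rw [Prod.norm_def, h, norm_eq_abs, sq_abs] <;> nlinarith [sq_nonneg v.1, sq_nonneg v.2]

/-- For `r(α) = R + δ_R cos(mα) − δ_I sin(mα)`, as `(δ_R,δ_I) → 0`
the radial projection of the Airy velocity satisfies, uniformly in `α ∈ [0,2π]`,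
`W·(cos α, sin α) = δ_I τ* cos(mα) + δ_R τ* sin(mα) + O(δ_R² + δ_I²)` with
`τ* = (m³ − (3/2)m)/R³`. -/
theorem perturbed_circle_airy_velocity_expansion (R : ℝ) (hR : 0 < R) (m : ℤ) :
    ∃ C ε : ℝ, 0 < C ∧ 0 < ε ∧
      ∀ δR δI : ℝ, δR ^ 2 + δI ^ 2 < ε ^ 2 → ∀ α ∈ Set.Icc (0 : ℝ) (2 * π),
        |airyRadialProj
            (fun a => R + δR * Real.cos (m * a) - δI * Real.sin (m * a)) α
          - ((m : ℝ) ^ 3 - (3 / 2) * (m : ℝ)) / R ^ 3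
              * (δI * Real.cos (m * α) + δR * Real.sin (m * α))|
        ≤ C * (δR ^ 2 + δI ^ 2) := by
  obtain ⟨K, hK, hFK⟩ :=
    (differentiableAt_circleAiryFactor m hR.ne').hasFDerivAt.isBigO_sub.exists_pos
  obtain ⟨ε, hε, hF⟩ := Metric.eventually_nhds_iff.mp hFK.bound
  refine ⟨(|(m : ℝ)| + 1) * K, min ε R, by positivity, by positivity, fun δR δI hδ α _ => ?_⟩
  set v := (modeRe m δR δI α, modeIm m δR δI α)
  have hv2 : ‖v‖ ^ 2 ≤ δR ^ 2 + δI ^ 2 :=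
    (sq_norm_le_fst_sq_add_snd_sq v).trans (modeRe_sq_add_modeIm_sq m δR δI α).le
  have hv : ‖v‖ < min ε R := lt_of_pow_lt_pow_left₀ 2 (by positivity) (hv2.trans_lt hδ)
  have hr : R + v.1 ≠ 0 := by
    have := (norm_fst_le v).trans_lt (hv.trans_le (min_le_right ε R))
    rw [norm_eq_abs] at this
    linarith [neg_abs_le v.1]
  have hcircle : (fun a => R + δR * cos (m * a) - δI * sin (m * a)) =
      fun a => R + modeRe m δR δI a := funext fun a => by simp only [modeRe]; ring
  have htarget : ((m : ℝ) ^ 3 - (3 / 2) * (m : ℝ)) / R ^ 3 * (δI * cos (m * α) + δR * sin (m * α))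
      = m * v.2 * circleAiryFactor m R 0 := by
    rw [circleAiryFactor_zero m hR]; simp only [v, modeIm]; ring
  rw [hcircle, airyRadialProj_perturbedCircle m δR δI R α hr, htarget, ← mul_sub, abs_mul,
    abs_mul]
  have hFv := hF (y := v) (by rw [dist_zero_right]; exact hv.trans_le (min_le_left ε R))
  rw [sub_zero, norm_eq_abs] at hFv
  calc |(m : ℝ)| * |v.2| * |circleAiryFactor m R v - circleAiryFactor m R 0|
      ≤ (|(m : ℝ)| + 1) * ‖v‖ * (K * ‖v‖) := by
        gcongr
        · linarith
        · exact norm_snd_le v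
    _ = (|(m : ℝ)| + 1) * K * ‖v‖ ^ 2 := by ring
    _ ≤ (|(m : ℝ)| + 1) * K * (δR ^ 2 + δI ^ 2) := by gcongr
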